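/- arXiv:2311.08611 — 2 statements merged into one kernel-verified Lean document; each statement's English description precedes it below -/
import Mathlib

section
/- Let α, c, μ, γ, p, ε, a, m, d, q be positive reals with p > m + d + μ, set b = a(m+d+μ)/(p−m−d−μ) and ℛ₀ = cα/(μ(μ+γ)), and assume ℛ₀ > 1 + εbc/(aμ). Then the SICMR system admits a unique interior equilibrium E* = (S*, I*, C*, M*, R*) with all coordinates positive, given by S* = α/(cb(M* + ε/a) + μ), I* = b(M* + ε/a), C* = ((q+μ)/m)·M*, R* = (1/μ)(qM* + γI*), where M* is the unique positive root of a₂M² + a₁M + a₀ = 0 with a₂ = (q+μ)(m+d+μ)/m + (μ+γ)b, a₁ = (q+μ)(m+d+μ)/m·(ε/a + μ/(bc)) + 2εb(μ+γ)/a + μ(μ+γ)/c − α, a₀ = (ε/a)(εb(μ+γ)/a + μ(μ+γ)/c − α). -/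
/-!
At an interior equilibrium, `M' = 0` determines `C` from `M`; since `C > 0`, `C' = 0` reads
`p I = (m + d + μ)(ε + I + a M)`, i.e. `I = b (M + ε / a)` (this is where `p > m + d + μ` enters);
`S' = 0` and `R' = 0` then determine `S` and `R`. Substituting all of this into `I' = 0` and
clearing the denominator `c I + μ` leaves `-c b (a₂ M² + a₁ M + a₀) = 0`. The leading coefficient
`a₂` is positive and the threshold condition on `ℛ₀` says exactly that `a₀ < 0`, so the quadratic
has a unique positive root, and the interior equilibria are in bijection with its positive roots.
-/

/-- A point `(S, I, C, M, R)` is an equilibrium of the SICMR system iff all five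
right-hand sides vanish. -/
def sicmrEquilibrium (α c μ γ p ε a m d q S I C M R : ℝ) : Prop :=
  α - c * S * I - μ * S = 0 ∧
  c * S * I - p * C * I / (ε + I + a * M) - γ * I - μ * I = 0 ∧
  p * C * I / (ε + I + a * M) - (m + d + μ) * C = 0 ∧
  m * C - (q + μ) * M = 0 ∧
  q * M + γ * I - μ * R = 0

theorem exists_unique_pos_root_of_pos_of_neg {A B C : ℝ} (hA : 0 < A) (hC : C < 0) :
    ∃! x : ℝ, 0 < x ∧ A * x ^ 2 + B * x + C = 0 := by
  obtain ⟨x, hx, hQx⟩ : ∃ x : ℝ, 0 < x ∧ A * x ^ 2 + B * x + C = 0 := by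
    set s := √(B ^ 2 - 4 * A * C)
    have hs : s ^ 2 = B ^ 2 - 4 * A * C := Real.sq_sqrt (by nlinarith [sq_nonneg B])
    have hBs : B < s := Real.lt_sqrt_of_sq_lt (by nlinarith)
    refine ⟨(s - B) / (2 * A), div_pos (by linarith) (by positivity), ?_⟩
    field_simp
    linear_combination hs
  refine ⟨x, ⟨hx, hQx⟩, fun y ⟨hy, hQy⟩ => ?_⟩
  -- `x (A x + B) = -C > 0`, so the second factor below is positive.
  have hAxB : 0 < A * x + B := pos_of_mul_pos_right (by linarith) hx.le
  have hfactor : (y - x) * (A * (y + x) + B) = 0 := by linear_combination hQy - hQx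
  have : 0 < A * (y + x) + B := by nlinarith
  linarith [(mul_eq_zero.mp hfactor).resolve_right this.ne']

section SICMR

variable {α c μ γ p ε a m d q b a₂ a₁ a₀ : ℝ}

theorem sicmr_lt_alpha_of_R₀_gt (hc : 0 < c) (hμ : 0 < μ) (hμγ : 0 < μ + γ) (ha : 0 < a)
    (h : c * α / (μ * (μ + γ)) > 1 + ε * b * c / (a * μ)) :
    ε * b * (μ + γ) / a + μ * (μ + γ) / c < α := by
  rw [gt_iff_lt, lt_div_iff₀ (by positivity)] at h
  calc ε * b * (μ + γ) / a + μ * (μ + γ) / c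
      = (1 + ε * b * c / (a * μ)) * (μ * (μ + γ)) / c := by field_simp; ring
    _ < c * α / c := by gcongr
    _ = α := by field_simp

theorem sicmr_quadratic_identity (hc : c ≠ 0) (ha : a ≠ 0) (hm : m ≠ 0) (hb : b ≠ 0)
    (ha₂ : a₂ = (q + μ) * (m + d + μ) / m + (μ + γ) * b)
    (ha₁ : a₁ = (q + μ) * (m + d + μ) / m * (ε / a + μ / (b * c)) +
      2 * ε * b * (μ + γ) / a + μ * (μ + γ) / c - α)
    (ha₀ : a₀ = ε / a * (ε * b * (μ + γ) / a + μ * (μ + γ) / c - α)) (M : ℝ) :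
    c * α * (b * (M + ε / a)) -
        ((m + d + μ) * ((q + μ) / m * M) + (γ + μ) * (b * (M + ε / a))) *
          (c * (b * (M + ε / a)) + μ) =
      -(c * b) * (a₂ * M ^ 2 + a₁ * M + a₀) := by
  subst ha₂ ha₁ ha₀
  field_simp
  ring

theorem sicmr_dC_eq_zero_iff (hε : 0 < ε) (ha : 0 < a) (hpm : p > m + d + μ)
    (hb : b = a * (m + d + μ) / (p - m - d - μ)) {I C M : ℝ} (hI : 0 < I) (hC : 0 < C)
    (hM : 0 < M) :
    p * C * I / (ε + I + a * M) - (m + d + μ) * C = 0 ↔ I = b * (M + ε / a) := by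
  have hpk : p - m - d - μ ≠ 0 := by linarith
  rw [sub_eq_zero, div_eq_iff (by positivity), mul_right_comm p, mul_right_comm (m + d + μ),
    mul_left_inj' hC.ne', hb]
  field_simp
  constructor <;> intro h <;> linear_combination h

theorem sicmr_dI_eq_zero_iff (hc : 0 < c) (hμ : 0 < μ) (ha : 0 < a) (hm : 0 < m) (hb : 0 < b)
    (ha₂ : a₂ = (q + μ) * (m + d + μ) / m + (μ + γ) * b)
    (ha₁ : a₁ = (q + μ) * (m + d + μ) / m * (ε / a + μ / (b * c)) +
      2 * ε * b * (μ + γ) / a + μ * (μ + γ) / c - α)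
    (ha₀ : a₀ = ε / a * (ε * b * (μ + γ) / a + μ * (μ + γ) / c - α)) {S I C M : ℝ}
    (hI : 0 < I) (hS : S = α / (c * I + μ)) (hIM : I = b * (M + ε / a))
    (hCM : C = (q + μ) / m * M) (hdC : p * C * I / (ε + I + a * M) = (m + d + μ) * C) :
    c * S * I - p * C * I / (ε + I + a * M) - γ * I - μ * I = 0 ↔
      a₂ * M ^ 2 + a₁ * M + a₀ = 0 := by
  have hcI : 0 < c * I + μ := by positivity
  have key := sicmr_quadratic_identity hc.ne' ha.ne' hm.ne' hb.ne' ha₂ ha₁ ha₀ M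
  rw [← hIM, ← hCM] at key
  have hcleared : (c * S * I - (m + d + μ) * C - γ * I - μ * I) * (c * I + μ) =
      -(c * b) * (a₂ * M ^ 2 + a₁ * M + a₀) := by
    rw [← key, hS]
    field_simp
    ring
  rw [hdC, ← mul_eq_zero_iff_right hcI.ne', hcleared,
    mul_eq_zero_iff_left (neg_ne_zero.2 (by positivity))]

theorem sicmrEquilibrium_iff (hc : 0 < c) (hμ : 0 < μ) (hε : 0 < ε) (ha : 0 < a) (hm : 0 < m)
    (hpm : p > m + d + μ) (hb0 : 0 < b) (hb : b = a * (m + d + μ) / (p - m - d - μ))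
    (ha₂ : a₂ = (q + μ) * (m + d + μ) / m + (μ + γ) * b)
    (ha₁ : a₁ = (q + μ) * (m + d + μ) / m * (ε / a + μ / (b * c)) +
      2 * ε * b * (μ + γ) / a + μ * (μ + γ) / c - α)
    (ha₀ : a₀ = ε / a * (ε * b * (μ + γ) / a + μ * (μ + γ) / c - α))
    {S I C M R : ℝ} (hI : 0 < I) (hC : 0 < C) (hM : 0 < M) :
    sicmrEquilibrium α c μ γ p ε a m d q S I C M R ↔
      S = α / (c * b * (M + ε / a) + μ) ∧ I = b * (M + ε / a) ∧ C = (q + μ) / m * M ∧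
        R = 1 / μ * (q * M + γ * I) ∧ a₂ * M ^ 2 + a₁ * M + a₀ = 0 := by
  have hS_iff : α - c * S * I - μ * S = 0 ↔ S = α / (c * I + μ) := by
    rw [eq_div_iff (by positivity)]
    constructor <;> intro h <;> linear_combination -h
  have hC_iff : m * C - (q + μ) * M = 0 ↔ C = (q + μ) / m * M := by
    rw [div_mul_eq_mul_div, eq_div_iff hm.ne']
    constructor <;> intro h <;> linear_combination h
  have hR_iff : q * M + γ * I - μ * R = 0 ↔ R = 1 / μ * (q * M + γ * I) := by
    rw [one_div_mul_eq_div, eq_div_iff hμ.ne']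
    constructor <;> intro h <;> linear_combination -h
  have hdC_iff := sicmr_dC_eq_zero_iff hε ha hpm hb hI hC hM
  have hdI_iff := sicmr_dI_eq_zero_iff (p := p) (S := S) (C := C) (M := M) hc hμ ha hm hb0
    ha₂ ha₁ ha₀ hI
  constructor
  · rintro ⟨hdS, hdI, hdC, hdM, hdR⟩
    have hS := hS_iff.1 hdS
    have hIM := hdC_iff.1 hdC
    have hCM := hC_iff.1 hdM
    exact ⟨by rw [hS, hIM, mul_assoc], hIM, hCM, hR_iff.1 hdR,
      (hdI_iff hS hIM hCM (sub_eq_zero.1 hdC)).1 hdI⟩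
  · rintro ⟨hS, hIM, hCM, hR, hQ⟩
    have hS' : S = α / (c * I + μ) := by rw [hS, hIM, mul_assoc]
    exact ⟨hS_iff.2 hS', (hdI_iff hS' hIM hCM (sub_eq_zero.1 (hdC_iff.2 hIM))).2 hQ,
      hdC_iff.2 hIM, hC_iff.2 hCM, hR_iff.2 hR⟩

end SICMR

theorem sicmr_interior_equilibrium_exists_unique_general
    (α c μ γ p ε a m d q : ℝ)
    (hα : 0 < α) (hc : 0 < c) (hμ : 0 < μ) (hγ : 0 < γ)
    (hε : 0 < ε) (ha : 0 < a) (hm : 0 < m) (hd : 0 < d) (hq : 0 < q)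
    (hpm : p > m + d + μ)
    (b R₀ a₂ a₁ a₀ : ℝ)
    (hb : b = a * (m + d + μ) / (p - m - d - μ))
    (hR₀ : R₀ = c * α / (μ * (μ + γ)))
    (ha₂ : a₂ = (q + μ) * (m + d + μ) / m + (μ + γ) * b)
    (ha₁ : a₁ = (q + μ) * (m + d + μ) / m * (ε / a + μ / (b * c)) +
      2 * ε * b * (μ + γ) / a + μ * (μ + γ) / c - α)
    (ha₀ : a₀ = ε / a * (ε * b * (μ + γ) / a + μ * (μ + γ) / c - α))
    (hR₀gt : R₀ > 1 + ε * b * c / (a * μ)) :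
    ∃ Mstar Sstar Istar Cstar Rstar : ℝ,
      0 < Mstar ∧ a₂ * Mstar ^ 2 + a₁ * Mstar + a₀ = 0 ∧
      (∀ M' : ℝ, 0 < M' → a₂ * M' ^ 2 + a₁ * M' + a₀ = 0 → M' = Mstar) ∧
      Sstar = α / (c * b * (Mstar + ε / a) + μ) ∧
      Istar = b * (Mstar + ε / a) ∧
      Cstar = (q + μ) / m * Mstar ∧
      Rstar = 1 / μ * (q * Mstar + γ * Istar) ∧
      0 < Sstar ∧ 0 < Istar ∧ 0 < Cstar ∧ 0 < Rstar ∧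
      sicmrEquilibrium α c μ γ p ε a m d q Sstar Istar Cstar Mstar Rstar ∧
      (∀ S I C M R : ℝ, 0 < S → 0 < I → 0 < C → 0 < M → 0 < R →
        sicmrEquilibrium α c μ γ p ε a m d q S I C M R →
        (S, I, C, M, R) = (Sstar, Istar, Cstar, Mstar, Rstar)) := by
  have hb0 : 0 < b := hb ▸ div_pos (by positivity) (by linarith)
  have ha₂0 : 0 < a₂ := ha₂ ▸ by positivity
  have ha₀0 : a₀ < 0 := ha₀ ▸ mul_neg_of_pos_of_neg (by positivity)
    (by linarith [sicmr_lt_alpha_of_R₀_gt hc hμ (by positivity) ha (hR₀ ▸ hR₀gt)])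
  obtain ⟨Ms, ⟨hM0, hQ⟩, huniq⟩ := exists_unique_pos_root_of_pos_of_neg (B := a₁) ha₂0 ha₀0
  have hequil_iff := @sicmrEquilibrium_iff α c μ γ p ε a m d q b a₂ a₁ a₀ hc hμ hε ha hm hpm hb0
    hb ha₂ ha₁ ha₀
  have hI0 : 0 < b * (Ms + ε / a) := by positivity
  have hC0 : 0 < (q + μ) / m * Ms := by positivity
  refine ⟨Ms, _, _, _, _, hM0, hQ, fun M' hM' hQ' => huniq M' ⟨hM', hQ'⟩, rfl, rfl, rfl, rfl,
    by positivity, hI0, hC0, by positivity,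
    (hequil_iff hI0 hC0 hM0).2 ⟨rfl, rfl, rfl, rfl, hQ⟩, ?_⟩
  intro S I C M R _ hI hC hM _ h
  obtain ⟨rfl, rfl, rfl, rfl, hQM⟩ := (hequil_iff hI hC hM).1 h
  obtain rfl := huniq M ⟨hM, hQM⟩
  rfl

/-- If `p > m + d + μ` and `ℛ₀ > 1 + εbc/(aμ)`, the SICMR
system admits a unique interior equilibrium `E* = (S*, I*, C*, M*, R*)`, given
explicitly in terms of the unique positive root `M*` of the quadratic
`a₂M² + a₁M + a₀ = 0`. -/
theorem sicmr_interior_equilibrium_exists_unique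
    (α c μ γ p ε a m d q : ℝ)
    (hα : 0 < α) (hc : 0 < c) (hμ : 0 < μ) (hγ : 0 < γ) (hp : 0 < p)
    (hε : 0 < ε) (ha : 0 < a) (hm : 0 < m) (hd : 0 < d) (hq : 0 < q)
    (hpm : p > m + d + μ)
    (b R₀ a₂ a₁ a₀ : ℝ)
    (hb : b = a * (m + d + μ) / (p - m - d - μ))
    (hR₀ : R₀ = c * α / (μ * (μ + γ)))
    (ha₂ : a₂ = (q + μ) * (m + d + μ) / m + (μ + γ) * b)
    (ha₁ : a₁ = (q + μ) * (m + d + μ) / m * (ε / a + μ / (b * c)) +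
      2 * ε * b * (μ + γ) / a + μ * (μ + γ) / c - α)
    (ha₀ : a₀ = ε / a * (ε * b * (μ + γ) / a + μ * (μ + γ) / c - α))
    (hR₀gt : R₀ > 1 + ε * b * c / (a * μ)) :
    ∃ Mstar Sstar Istar Cstar Rstar : ℝ,
      0 < Mstar ∧ a₂ * Mstar ^ 2 + a₁ * Mstar + a₀ = 0 ∧
      (∀ M' : ℝ, 0 < M' → a₂ * M' ^ 2 + a₁ * M' + a₀ = 0 → M' = Mstar) ∧
      Sstar = α / (c * b * (Mstar + ε / a) + μ) ∧
      Istar = b * (Mstar + ε / a) ∧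
      Cstar = (q + μ) / m * Mstar ∧
      Rstar = 1 / μ * (q * Mstar + γ * Istar) ∧
      0 < Sstar ∧ 0 < Istar ∧ 0 < Cstar ∧ 0 < Rstar ∧
      sicmrEquilibrium α c μ γ p ε a m d q Sstar Istar Cstar Mstar Rstar ∧
      (∀ S I C M R : ℝ, 0 < S → 0 < I → 0 < C → 0 < M → 0 < R →
        sicmrEquilibrium α c μ γ p ε a m d q S I C M R →
        (S, I, C, M, R) = (Sstar, Istar, Cstar, Mstar, Rstar)) :=
  sicmr_interior_equilibrium_exists_unique_general α c μ γ p ε a m d q hα hc hμ hγ hε ha hm hd hq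
    hpm b R₀ a₂ a₁ a₀ hb hR₀ ha₂ ha₁ ha₀ hR₀gt
end

section
/- Let α, c, μ, γ, p, m, d, q be positive reals with ℛ₀ = cα/(μ(μ+γ)) satisfying 1 < ℛ₀ ≤ 1 + c(m+d+μ)/(μp). Then for the simplified SICMR system the boundary equilibrium E₁ = ((μ+γ)/c, (μ/c)(ℛ₀−1), 0, 0, (γ/c)(ℛ₀−1)) is globally asymptotically stable in Ω off the S-axis: every solution with initial value in Ω = {(S, I, C, M, R) ∈ ℝ₊^5 : S + I + C + M + R ≤ α/μ} and I(0) > 0 converges to E₁ as t → ∞. Moreover, if ℛ₀ > 1 + c(m+d+μ)/(μp), then E₁ is linearly unstable (the Jacobian at E₁ has the positive eigenvalue pI₁ − (m+d+μ) where I₁ = (μ/c)(ℛ₀−1)). -/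
/-!
Integrating factors keep the solution nonnegative (and `I` positive), and the total population
`N` satisfies `N' = α - μ N - d C ≤ α - μ N`, so the trajectory stays in a compact box.
With `E₁ = (S₁, I₁, 0, 0, R₁)`, the Volterra-type function
`W = S - S₁ log S + I - I₁ log I + C` has
`W' = -(μ + c I₁) (S - S₁)² / S - (m + d + μ - p I₁) C`, which is `≤ 0` exactly under the
threshold condition. Since `W` is bounded below and all derivatives are bounded on the box,
Barbalat's lemma gives `(S - S₁)² → 0`; applied to `S` it gives `S' → 0`, hence `I → I₁`, and
applied to `log I` it gives `c S - p C - γ - μ → 0`, hence `C → 0`. Then `M` and `R` solve linear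
equations with converging forcing. For the instability, the third row of the Jacobian at `E₁` is
`(p I₁ - (m + d + μ)) e₃`.
-/

open Filter Set Topology

lemma monotoneOn_of_hasDerivAt_nonneg {D : Set ℝ} (hD : Convex ℝ D) {f f' : ℝ → ℝ}
    (hf : ∀ x ∈ D, HasDerivAt f (f' x) x) (hf' : ∀ x ∈ D, 0 ≤ f' x) : MonotoneOn f D :=
  monotoneOn_of_hasDerivWithinAt_nonneg hD (fun x hx ↦ (hf x hx).continuousAt.continuousWithinAt)
    (fun x hx ↦ (hf x (interior_subset hx)).hasDerivWithinAt) fun x hx ↦ hf' x (interior_subset hx)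

lemma strictMonoOn_of_hasDerivAt_pos {D : Set ℝ} (hD : Convex ℝ D) {f f' : ℝ → ℝ}
    (hf : ∀ x ∈ D, HasDerivAt f (f' x) x) (hf' : ∀ x ∈ D, 0 < f' x) : StrictMonoOn f D :=
  strictMonoOn_of_hasDerivWithinAt_pos hD (fun x hx ↦ (hf x hx).continuousAt.continuousWithinAt)
    (fun x hx ↦ (hf x (interior_subset hx)).hasDerivWithinAt) fun x hx ↦ hf' x (interior_subset hx)

lemma MonotoneOn.exists_tendsto_atTop_of_Ici {F : ℝ → ℝ} {a B : ℝ} (hF : MonotoneOn F (Ici a))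
    (hB : ∀ t ≥ a, F t ≤ B) : ∃ L, Tendsto F atTop (𝓝 L) :=
  ⟨_, tendsto_comp_val_Ici_atTop.1 <| tendsto_atTop_ciSup (monotoneOn_iff_monotone.1 hF)
    ⟨B, by rintro _ ⟨t, rfl⟩; exact hB t t.2⟩⟩

lemma exists_hasDerivAt_of_continuousAt_Ici {f : ℝ → ℝ} {a : ℝ}
    (hf : ∀ t ≥ a, ContinuousAt f t) : ∃ F : ℝ → ℝ, ∀ t ≥ a, HasDerivAt F (f t) t := by
  have hg : Continuous fun s ↦ f (max s a) := continuous_iff_continuousAt.2 fun s ↦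
    (hf _ (le_max_right s a)).comp (f := fun s ↦ max s a)
      (continuous_id.max continuous_const).continuousAt
  refine ⟨fun u ↦ ∫ s in a..u, f (max s a), fun t ht ↦ ?_⟩
  simpa [max_eq_left ht] using (hg.integral_hasStrictDerivAt a t).hasDerivAt

lemma exists_integratingFactor {x k f : ℝ → ℝ} {a : ℝ} (hk : ∀ t ≥ a, ContinuousAt k t)
    (hx : ∀ t ≥ a, HasDerivAt x (k t * x t + f t) t) :
    ∃ w : ℝ → ℝ, (∀ t, 0 < w t) ∧ ∀ t ≥ a, HasDerivAt (fun s ↦ w s * x s) (w t * f t) t := by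
  obtain ⟨K, hK⟩ := exists_hasDerivAt_of_continuousAt_Ici hk
  refine ⟨fun s ↦ Real.exp (-K s), fun _ ↦ Real.exp_pos _, fun t ht ↦ ?_⟩
  exact ((hK t ht).neg.exp.mul (hx t ht)).congr_deriv (by simp only [Pi.neg_apply]; ring)

section LinearODE

variable {x k f : ℝ → ℝ} {a : ℝ}

lemma nonneg_of_hasDerivAt_linear (hk : ∀ t ≥ a, ContinuousAt k t)
    (hx : ∀ t ≥ a, HasDerivAt x (k t * x t + f t) t) (hf : ∀ t ≥ a, 0 ≤ f t) (hxa : 0 ≤ x a) :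
    ∀ t ≥ a, 0 ≤ x t := by
  obtain ⟨w, hw, hwx⟩ := exists_integratingFactor hk hx
  intro t ht
  have := monotoneOn_of_hasDerivAt_nonneg (convex_Ici a) hwx
    (fun s hs ↦ mul_nonneg (hw s).le (hf s hs)) self_mem_Ici ht ht
  exact nonneg_of_mul_nonneg_right ((mul_nonneg (hw a).le hxa).trans this) (hw t)

lemma pos_of_hasDerivAt_linear (hk : ∀ t ≥ a, ContinuousAt k t)
    (hx : ∀ t ≥ a, HasDerivAt x (k t * x t + f t) t) (hf : ∀ t ≥ a, 0 ≤ f t) (hxa : 0 < x a) :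
    ∀ t ≥ a, 0 < x t := by
  obtain ⟨w, hw, hwx⟩ := exists_integratingFactor hk hx
  intro t ht
  have := monotoneOn_of_hasDerivAt_nonneg (convex_Ici a) hwx
    (fun s hs ↦ mul_nonneg (hw s).le (hf s hs)) self_mem_Ici ht ht
  exact pos_of_mul_pos_right ((mul_pos (hw a) hxa).trans_le this) (hw t).le

lemma pos_of_hasDerivAt_linear_of_pos (hk : ∀ t ≥ a, ContinuousAt k t)
    (hx : ∀ t ≥ a, HasDerivAt x (k t * x t + f t) t) (hf : ∀ t ≥ a, 0 < f t) (hxa : 0 ≤ x a) :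
    ∀ t > a, 0 < x t := by
  obtain ⟨w, hw, hwx⟩ := exists_integratingFactor hk hx
  intro t ht
  have := strictMonoOn_of_hasDerivAt_pos (convex_Ici a) hwx
    (fun s hs ↦ mul_pos (hw s) (hf s hs)) self_mem_Ici ht.le ht
  exact pos_of_mul_pos_right ((mul_nonneg (hw a).le hxa).trans_lt this) (hw t).le

end LinearODE

lemma uniformContinuousOn_Ici_of_hasDerivAt {E : Type*} [TopologicalSpace E] {K : Set E}
    (hK : IsCompact K) {φ : E → ℝ} (hφ : ContinuousOn φ K) {x : ℝ → E} {g : ℝ → ℝ} {a : ℝ}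
    (hx : ∀ t ≥ a, x t ∈ K) (hg : ∀ t ≥ a, HasDerivAt g (φ (x t)) t) :
    UniformContinuousOn g (Ici a) := by
  obtain ⟨C, hC⟩ := hK.exists_bound_of_continuousOn hφ
  refine (LipschitzOnWith.uniformContinuousOn (K := C.toNNReal) ?_)
  refine (convex_Ici a).lipschitzOnWith_of_nnnorm_hasDerivWithin_le
    (fun t ht ↦ (hg t ht).hasDerivWithinAt) fun t ht ↦ ?_
  rw [← NNReal.coe_le_coe, coe_nnnorm]
  exact (hC _ (hx t ht)).trans (Real.le_coe_toNNReal C)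

/-- One-sided Barbalat lemma. -/
lemma eventually_lt_of_tendsto_of_le_deriv {F f g : ℝ → ℝ} {a L : ℝ}
    (hF : ∀ t ≥ a, HasDerivAt F (f t) t) (hgf : ∀ t ≥ a, g t ≤ f t)
    (hg : UniformContinuousOn g (Ici a)) (hFL : Tendsto F atTop (𝓝 L)) {ε : ℝ} (hε : 0 < ε) :
    ∀ᶠ t in atTop, g t < ε := by
  obtain ⟨δ, hδ, hgδ⟩ := Metric.uniformContinuousOn_iff.1 hg (ε / 2) (half_pos hε)
  have hincr : Tendsto (fun t ↦ F (t + δ / 2) - F t) atTop (𝓝 0) := by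
    simpa using (hFL.comp (tendsto_atTop_add_const_right _ (δ / 2) tendsto_id)).sub hFL
  filter_upwards [eventually_ge_atTop a, hincr.eventually (gt_mem_nhds (by positivity :
    (0 : ℝ) < ε / 2 * (δ / 2)))] with t hta hFt
  -- If `g t ≥ ε`, then `f ≥ ε / 2` on `[t, t + δ / 2]`, so `F` grows there by `ε δ / 4`.
  by_contra! hgt
  have hf : ∀ u ∈ Icc t (t + δ / 2), 0 ≤ f u - ε / 2 := fun u hu ↦ by
    have hua : a ≤ u := hta.trans hu.1
    have := hgδ u hua t hta (by rw [Real.dist_eq, abs_lt]; constructor <;> linarith [hu.1, hu.2])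
    rw [Real.dist_eq, abs_lt] at this
    linarith [hgf u hua]
  have := monotoneOn_of_hasDerivAt_nonneg (convex_Icc t (t + δ / 2))
    (fun u hu ↦ (hF u (hta.trans hu.1)).sub ((hasDerivAt_id u).const_mul (ε / 2)))
    (by simpa using hf) (left_mem_Icc.2 (by linarith)) (right_mem_Icc.2 (by linarith))
    (by linarith)
  simp only [Pi.sub_apply, id] at this
  linarith

/-- Barbalat's lemma. -/
lemma tendsto_zero_of_tendsto_of_hasDerivAt {F f : ℝ → ℝ} {a L : ℝ}
    (hF : ∀ t ≥ a, HasDerivAt F (f t) t) (hf : UniformContinuousOn f (Ici a))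
    (hFL : Tendsto F atTop (𝓝 L)) : Tendsto f atTop (𝓝 0) := by
  refine tendsto_order.2 ⟨fun ε hε ↦ ?_, fun ε hε ↦
    eventually_lt_of_tendsto_of_le_deriv hF (fun _ _ ↦ le_rfl) hf hFL hε⟩
  have hneg : UniformContinuousOn (fun t ↦ -f t) (Ici a) :=
    uniformContinuous_neg.comp_uniformContinuousOn hf
  filter_upwards [eventually_lt_of_tendsto_of_le_deriv (fun t ht ↦ (hF t ht).neg)
    (fun _ _ ↦ le_rfl) hneg hFL.neg (neg_pos.2 hε)] with t ht
  linarith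

lemma eventually_lt_of_hasDerivAt_sub_mul {x g : ℝ → ℝ} {a b : ℝ} (hb : 0 < b)
    (hx : ∀ t ≥ a, HasDerivAt x (g t - b * x t) t) (hg : Tendsto g atTop (𝓝 0)) {ε : ℝ}
    (hε : 0 < ε) : ∀ᶠ t in atTop, x t < ε := by
  obtain ⟨T, hT⟩ := eventually_atTop.1 <| hg.eventually <|
    eventually_le_nhds (show (0 : ℝ) < b * (ε / 2) by positivity)
  set T' := max T a
  -- `x - ε / 2` is dominated by a solution of `y' = -b y`.
  have hmono : MonotoneOn (fun t ↦ Real.exp (b * t) * (ε / 2 - x t)) (Ici T') :=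
    monotoneOn_of_hasDerivAt_nonneg (f' := fun t ↦ Real.exp (b * t) * (b * (ε / 2) - g t))
      (convex_Ici T') (fun t ht ↦
        (((hasDerivAt_id t).const_mul b).exp.mul
          ((hx t (le_of_max_le_right ht)).const_sub (ε / 2))).congr_deriv
          (by simp only [id]; ring))
      fun t ht ↦ mul_nonneg (Real.exp_pos _).le (sub_nonneg.2 (hT t (le_of_max_le_left ht)))
  set c₀ := Real.exp (b * T') * (ε / 2 - x T')
  have hdecay : Tendsto (fun t ↦ ε / 2 - c₀ * Real.exp (-(b * t))) atTop (𝓝 (ε / 2 - c₀ * 0)) :=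
    tendsto_const_nhds.sub <| (Real.tendsto_exp_neg_atTop_nhds_zero.comp
      (tendsto_id.const_mul_atTop hb)).const_mul c₀
  filter_upwards [eventually_ge_atTop T', hdecay.eventually
    (gt_mem_nhds (show ε / 2 - c₀ * 0 < ε by linarith))]
    with t ht hlt
  have h1 := hmono self_mem_Ici ht ht
  have h2 : c₀ * Real.exp (-(b * t)) ≤ ε / 2 - x t := by
    calc c₀ * Real.exp (-(b * t))
        ≤ Real.exp (b * t) * (ε / 2 - x t) * Real.exp (-(b * t)) :=
          mul_le_mul_of_nonneg_right h1 (Real.exp_pos _).le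
      _ = ε / 2 - x t := by
          rw [mul_right_comm, ← Real.exp_add, add_neg_cancel, Real.exp_zero, one_mul]
  linarith

lemma tendsto_zero_of_hasDerivAt_sub_mul {x g : ℝ → ℝ} {a b : ℝ} (hb : 0 < b)
    (hx : ∀ t ≥ a, HasDerivAt x (g t - b * x t) t) (hg : Tendsto g atTop (𝓝 0)) :
    Tendsto x atTop (𝓝 0) := by
  refine tendsto_order.2 ⟨fun ε hε ↦ ?_, fun ε hε ↦ eventually_lt_of_hasDerivAt_sub_mul hb hx hg hε⟩
  filter_upwards [eventually_lt_of_hasDerivAt_sub_mul (x := fun t ↦ -x t) (g := fun t ↦ -g t) hb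
    (fun t ht ↦ (hx t ht).neg.congr_deriv (by ring))
    (by simpa using hg.neg) (neg_pos.2 hε)] with t ht
  linarith

lemma self_sub_mul_log_le {a x : ℝ} (ha : 0 < a) (hx : 0 < x) :
    a - a * Real.log a ≤ x - a * Real.log x := by
  have h := Real.log_le_sub_one_of_pos (div_pos hx ha)
  rw [Real.log_div hx.ne' ha.ne', le_sub_iff_add_le, div_eq_mul_inv] at h
  nlinarith [mul_inv_cancel₀ ha.ne']

lemma mem_spectrum_of_row_eq_single {n R : Type*} [Fintype n] [DecidableEq n] [CommRing R]
    [Nontrivial R] {A : Matrix n n R} {r : R} (i : n) (hA : A i = Pi.single i r) :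
    r ∈ spectrum R A := by
  rw [spectrum.mem_iff, Matrix.isUnit_iff_isUnit_det,
    Matrix.det_eq_zero_of_row_eq_zero i fun j ↦ ?_]
  · exact not_isUnit_zero
  · rw [Matrix.sub_apply, hA, Matrix.algebraMap_matrix_apply]
    by_cases hij : i = j
    · subst hij; simp
    · simp [hij, Ne.symm hij]

structure IsSICMRSolution (α c μ γ p m d q : ℝ) (S I C M R : ℝ → ℝ) : Prop where
  hasDerivAt_S : ∀ t ≥ 0, HasDerivAt S (α - c * S t * I t - μ * S t) t
  hasDerivAt_I : ∀ t ≥ 0, HasDerivAt I (c * S t * I t - p * C t * I t - γ * I t - μ * I t) t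
  hasDerivAt_C : ∀ t ≥ 0, HasDerivAt C (p * C t * I t - m * C t - d * C t - μ * C t) t
  hasDerivAt_M : ∀ t ≥ 0, HasDerivAt M (m * C t - q * M t - μ * M t) t
  hasDerivAt_R : ∀ t ≥ 0, HasDerivAt R (q * M t + γ * I t - μ * R t) t

noncomputable def sicmrLyapunov (S₁ I₁ s i x : ℝ) : ℝ :=
  s - S₁ * Real.log s + (i - I₁ * Real.log i) + x

lemma sicmrLyapunov_ge {S₁ I₁ s i x : ℝ} (hS₁ : 0 < S₁) (hI₁ : 0 < I₁) (hs : 0 < s) (hi : 0 < i)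
    (hx : 0 ≤ x) :
    S₁ - S₁ * Real.log S₁ + (I₁ - I₁ * Real.log I₁) ≤ sicmrLyapunov S₁ I₁ s i x := by
  have := self_sub_mul_log_le hS₁ hs
  have := self_sub_mul_log_le hI₁ hi
  unfold sicmrLyapunov
  linarith

namespace IsSICMRSolution

variable {α c μ γ p m d q : ℝ} {S I C M R : ℝ → ℝ}

lemma pos_I (h : IsSICMRSolution α c μ γ p m d q S I C M R) (hI0 : 0 < I 0) :
    ∀ t ≥ 0, 0 < I t :=
  pos_of_hasDerivAt_linear (k := fun t ↦ c * S t - p * C t - γ - μ) (f := 0)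
    (fun t ht ↦ by
      have := (h.hasDerivAt_S t ht).continuousAt
      have := (h.hasDerivAt_C t ht).continuousAt
      fun_prop)
    (fun t ht ↦ (h.hasDerivAt_I t ht).congr_deriv (by simp only [Pi.zero_apply]; ring))
    (fun _ _ ↦ le_rfl) hI0

lemma nonneg_C (h : IsSICMRSolution α c μ γ p m d q S I C M R) (hC0 : 0 ≤ C 0) :
    ∀ t ≥ 0, 0 ≤ C t :=
  nonneg_of_hasDerivAt_linear (k := fun t ↦ p * I t - m - d - μ) (f := 0)
    (fun t ht ↦ by
      have := (h.hasDerivAt_I t ht).continuousAt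
      fun_prop)
    (fun t ht ↦ (h.hasDerivAt_C t ht).congr_deriv (by simp only [Pi.zero_apply]; ring))
    (fun _ _ ↦ le_rfl) hC0

lemma pos_S (h : IsSICMRSolution α c μ γ p m d q S I C M R) (hα : 0 < α) (hS0 : 0 ≤ S 0) :
    ∀ t > 0, 0 < S t :=
  pos_of_hasDerivAt_linear_of_pos (k := fun t ↦ -(c * I t + μ)) (f := fun _ ↦ α)
    (fun t ht ↦ by
      have := (h.hasDerivAt_I t ht).continuousAt
      fun_prop)
    (fun t ht ↦ (h.hasDerivAt_S t ht).congr_deriv (by ring)) (fun _ _ ↦ hα) hS0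

lemma nonneg_M (h : IsSICMRSolution α c μ γ p m d q S I C M R) (hm : 0 ≤ m)
    (hC : ∀ t ≥ 0, 0 ≤ C t) (hM0 : 0 ≤ M 0) : ∀ t ≥ 0, 0 ≤ M t :=
  nonneg_of_hasDerivAt_linear (k := fun _ ↦ -(q + μ)) (f := fun t ↦ m * C t)
    (fun _ _ ↦ continuousAt_const)
    (fun t ht ↦ (h.hasDerivAt_M t ht).congr_deriv (by ring))
    (fun t ht ↦ mul_nonneg hm (hC t ht)) hM0

lemma nonneg_R (h : IsSICMRSolution α c μ γ p m d q S I C M R) (hq : 0 ≤ q) (hγ : 0 ≤ γ)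
    (hI : ∀ t ≥ 0, 0 ≤ I t) (hM : ∀ t ≥ 0, 0 ≤ M t) (hR0 : 0 ≤ R 0) : ∀ t ≥ 0, 0 ≤ R t :=
  nonneg_of_hasDerivAt_linear (k := fun _ ↦ -μ) (f := fun t ↦ q * M t + γ * I t)
    (fun _ _ ↦ continuousAt_const)
    (fun t ht ↦ (h.hasDerivAt_R t ht).congr_deriv (by ring))
    (fun t ht ↦ add_nonneg (mul_nonneg hq (hM t ht)) (mul_nonneg hγ (hI t ht))) hR0

lemma total_le (h : IsSICMRSolution α c μ γ p m d q S I C M R) (hμ : 0 < μ) (hd : 0 ≤ d)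
    (hC : ∀ t ≥ 0, 0 ≤ C t) (hN0 : S 0 + I 0 + C 0 + M 0 + R 0 ≤ α / μ) :
    ∀ t ≥ 0, S t + I t + C t + M t + R t ≤ α / μ := by
  have := nonneg_of_hasDerivAt_linear (x := fun t ↦ α / μ - (S t + I t + C t + M t + R t))
    (k := fun _ ↦ -μ) (f := fun t ↦ d * C t) (fun _ _ ↦ continuousAt_const)
    (fun t ht ↦ ((((((h.hasDerivAt_S t ht).add (h.hasDerivAt_I t ht)).add
      (h.hasDerivAt_C t ht)).add (h.hasDerivAt_M t ht)).add
      (h.hasDerivAt_R t ht)).const_sub (α / μ)).congr_deriv (by field_simp; ring))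
    (fun t ht ↦ mul_nonneg hd (hC t ht)) (sub_nonneg.2 hN0)
  exact fun t ht ↦ sub_nonneg.1 (this t ht)

variable {S₁ I₁ B : ℝ}

lemma hasDerivAt_sicmrLyapunov (h : IsSICMRSolution α c μ γ p m d q S I C M R)
    (hγ : c * S₁ = μ + γ) (hα : c * S₁ * I₁ + μ * S₁ = α) {t : ℝ} (ht : 0 ≤ t)
    (hS : 0 < S t) (hI : 0 < I t) :
    HasDerivAt (fun u ↦ sicmrLyapunov S₁ I₁ (S u) (I u) (C u))
      (-((μ + c * I₁) * (S t - S₁) ^ 2 / S t + (m + d + μ - p * I₁) * C t)) t := by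
  have hS' := h.hasDerivAt_S t ht
  have hI' := h.hasDerivAt_I t ht
  refine (((hS'.sub ((hS'.log hS.ne').const_mul S₁)).add
    (hI'.sub ((hI'.log hI.ne').const_mul I₁))).add (h.hasDerivAt_C t ht)).congr_deriv ?_
  rw [← hα, show γ = c * S₁ - μ by linarith]
  field_simp
  ring

lemma tendsto_S (h : IsSICMRSolution α c μ γ p m d q S I C M R) (hc : 0 < c) (hμ : 0 < μ)
    (hS₁ : 0 < S₁) (hI₁ : 0 < I₁) (hγ : c * S₁ = μ + γ) (hα : c * S₁ * I₁ + μ * S₁ = α)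
    (hk : p * I₁ ≤ m + d + μ) (hS : ∀ t > 0, 0 < S t) (hI : ∀ t ≥ 0, 0 < I t)
    (hbox : ∀ t ≥ 0, (S t, I t, C t) ∈ Icc 0 B ×ˢ Icc 0 B ×ˢ Icc 0 B) :
    Tendsto S atTop (𝓝 S₁) := by
  set W := fun u ↦ sicmrLyapunov S₁ I₁ (S u) (I u) (C u)
  set ρ := fun t ↦ (μ + c * I₁) * (S t - S₁) ^ 2 / S t + (m + d + μ - p * I₁) * C t
  have hW : ∀ t ≥ 1, HasDerivAt (fun u ↦ -W u) (ρ t) t := fun t ht ↦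
    (h.hasDerivAt_sicmrLyapunov hγ hα (by linarith) (hS t (by linarith))
      (hI t (by linarith))).neg.congr_deriv (neg_neg _)
  have hB : 0 < B := (hS 1 one_pos).trans_le (hbox 1 zero_le_one).1.2
  set κ := (μ + c * I₁) / B
  have hκ : 0 < κ := by positivity
  set g := fun t ↦ κ * (S t - S₁) ^ 2
  -- Since `S ≤ B`, the dissipation `ρ` of the Lyapunov function dominates `g`.
  have hgρ : ∀ t ≥ 1, g t ≤ ρ t := fun t ht ↦ by
    have hSt := hS t (by linarith)
    have hbt := hbox t (by linarith)
    have : g t ≤ (μ + c * I₁) * (S t - S₁) ^ 2 / S t := by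
      rw [show g t = (μ + c * I₁) * (S t - S₁) ^ 2 / B by ring]
      exact div_le_div_of_nonneg_left (by positivity) hSt hbt.1.2
    have : 0 ≤ (m + d + μ - p * I₁) * C t := mul_nonneg (by linarith) hbt.2.2.1
    linarith
  have hg0 : ∀ t, 0 ≤ g t := fun t ↦ by positivity
  obtain ⟨L, hL⟩ := MonotoneOn.exists_tendsto_atTop_of_Ici
    (monotoneOn_of_hasDerivAt_nonneg (convex_Ici 1) hW fun t ht ↦ (hg0 t).trans (hgρ t ht))
    (B := -(S₁ - S₁ * Real.log S₁ + (I₁ - I₁ * Real.log I₁))) fun t ht ↦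
      neg_le_neg (sicmrLyapunov_ge hS₁ hI₁ (hS t (by linarith)) (hI t (by linarith))
        (hbox t (by linarith)).2.2.1)
  have hg : UniformContinuousOn g (Ici 1) :=
    uniformContinuousOn_Ici_of_hasDerivAt
      (isCompact_Icc.prod (isCompact_Icc.prod isCompact_Icc))
      (φ := fun ⟨s, i, _⟩ ↦ κ * (2 * (s - S₁) * (α - c * s * i - μ * s)))
      (by fun_prop) (fun t ht ↦ hbox t (by linarith)) fun t ht ↦
        (((h.hasDerivAt_S t (by linarith)).sub_const S₁).pow 2).const_mul κ
          |>.congr_deriv (by ring)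
  refine Metric.tendsto_nhds.2 fun ε hε ↦ ?_
  filter_upwards [eventually_lt_of_tendsto_of_le_deriv hW hgρ hg hL
    (show 0 < κ * ε ^ 2 by positivity)] with t ht
  exact Real.dist_eq _ _ ▸ abs_lt_of_sq_lt_sq (lt_of_mul_lt_mul_left ht hκ.le) hε.le

lemma tendsto_I (h : IsSICMRSolution α c μ γ p m d q S I C M R) (hc : 0 < c) (hS₁ : 0 < S₁)
    (hα : c * S₁ * I₁ + μ * S₁ = α) (hS : ∀ t > 0, 0 < S t)
    (hbox : ∀ t ≥ 0, (S t, I t, C t) ∈ Icc 0 B ×ˢ Icc 0 B ×ˢ Icc 0 B)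
    (hSlim : Tendsto S atTop (𝓝 S₁)) : Tendsto I atTop (𝓝 I₁) := by
  have hS' : Tendsto (fun t ↦ α - c * S t * I t - μ * S t) atTop (𝓝 0) :=
    tendsto_zero_of_tendsto_of_hasDerivAt h.hasDerivAt_S
      (uniformContinuousOn_Ici_of_hasDerivAt
        (isCompact_Icc.prod (isCompact_Icc.prod isCompact_Icc))
        (φ := fun ⟨s, i, x⟩ ↦ -(c * ((α - c * s * i - μ * s) * i
          + s * (c * s * i - p * x * i - γ * i - μ * i))) - μ * (α - c * s * i - μ * s))
        (by fun_prop) hbox fun t ht ↦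
          (((hasDerivAt_const t α).sub (((h.hasDerivAt_S t ht).const_mul c).mul
            (h.hasDerivAt_I t ht))).sub ((h.hasDerivAt_S t ht).const_mul μ)).congr_deriv
            (by ring)) hSlim
  have hlim := (((tendsto_const_nhds (x := α)).sub (hSlim.const_mul μ)).sub hS').div
    (hSlim.const_mul c) (by positivity)
  rw [show (α - μ * S₁ - 0) / (c * S₁) = I₁ by field_simp; linarith] at hlim
  refine hlim.congr' ?_
  filter_upwards [eventually_gt_atTop 0] with t ht
  simp only [Pi.div_apply]
  field_simp [(hS t ht).ne']
  ring

lemma tendsto_C (h : IsSICMRSolution α c μ γ p m d q S I C M R) (hp : 0 < p)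
    (hI₁ : 0 < I₁) (hγ : c * S₁ = μ + γ) (hI : ∀ t ≥ 0, 0 < I t)
    (hbox : ∀ t ≥ 0, (S t, I t, C t) ∈ Icc 0 B ×ˢ Icc 0 B ×ˢ Icc 0 B)
    (hSlim : Tendsto S atTop (𝓝 S₁)) (hIlim : Tendsto I atTop (𝓝 I₁)) :
    Tendsto C atTop (𝓝 0) := by
  -- Barbalat applied to `log I`, whose derivative is the per capita growth rate of `I`.
  have hrate : Tendsto (fun t ↦ c * S t - p * C t - γ - μ) atTop (𝓝 0) :=
    tendsto_zero_of_tendsto_of_hasDerivAt (F := fun t ↦ Real.log (I t))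
      (fun t ht ↦ ((h.hasDerivAt_I t ht).log (hI t ht).ne').congr_deriv
        (by field_simp [(hI t ht).ne']))
      (uniformContinuousOn_Ici_of_hasDerivAt
        (isCompact_Icc.prod (isCompact_Icc.prod isCompact_Icc))
        (φ := fun ⟨s, i, x⟩ ↦
          c * (α - c * s * i - μ * s) - p * (p * x * i - m * x - d * x - μ * x))
        (by fun_prop) hbox fun t ht ↦
          (((((h.hasDerivAt_S t ht).const_mul c).sub ((h.hasDerivAt_C t ht).const_mul p)).sub_const
            γ).sub_const μ).congr_deriv (by ring))
      (hIlim.log hI₁.ne')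
  have hlim := ((((hSlim.const_mul c).sub_const γ).sub_const μ).sub hrate).div_const p
  rw [show (c * S₁ - γ - μ - 0) / p = 0 by rw [hγ]; ring] at hlim
  refine hlim.congr fun t ↦ ?_
  field_simp
  ring

lemma tendsto_M (h : IsSICMRSolution α c μ γ p m d q S I C M R) (hqμ : 0 < q + μ)
    (hClim : Tendsto C atTop (𝓝 0)) : Tendsto M atTop (𝓝 0) :=
  tendsto_zero_of_hasDerivAt_sub_mul (g := fun t ↦ m * C t) hqμ
    (fun t ht ↦ (h.hasDerivAt_M t ht).congr_deriv (by ring)) (by simpa using hClim.const_mul m)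

lemma tendsto_R (h : IsSICMRSolution α c μ γ p m d q S I C M R) (hμ : 0 < μ)
    (hIlim : Tendsto I atTop (𝓝 I₁)) (hMlim : Tendsto M atTop (𝓝 0)) :
    Tendsto R atTop (𝓝 (γ * I₁ / μ)) := by
  have := tendsto_zero_of_hasDerivAt_sub_mul (x := fun t ↦ R t - γ * I₁ / μ)
    (g := fun t ↦ q * M t + γ * (I t - I₁)) hμ
    (fun t ht ↦ ((h.hasDerivAt_R t ht).sub_const _).congr_deriv (by field_simp; ring))
    (by simpa using (hMlim.const_mul q).add ((hIlim.sub_const I₁).const_mul γ))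
  simpa using this.add_const (γ * I₁ / μ)

theorem tendsto_boundaryEquilibrium (h : IsSICMRSolution α c μ γ p m d q S I C M R)
    (hα : 0 < α) (hc : 0 < c) (hμ : 0 < μ) (hγ : 0 ≤ γ) (hp : 0 < p) (hm : 0 ≤ m)
    (hd : 0 ≤ d) (hq : 0 ≤ q) (hS₁ : 0 < S₁) (hI₁ : 0 < I₁) (hγS₁ : c * S₁ = μ + γ)
    (hαE : c * S₁ * I₁ + μ * S₁ = α) (hk : p * I₁ ≤ m + d + μ)
    (hΩ : 0 ≤ S 0 ∧ 0 ≤ I 0 ∧ 0 ≤ C 0 ∧ 0 ≤ M 0 ∧ 0 ≤ R 0 ∧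
      S 0 + I 0 + C 0 + M 0 + R 0 ≤ α / μ) (hI0 : 0 < I 0) :
    Tendsto (fun t ↦ (S t, I t, C t, M t, R t)) atTop (𝓝 (S₁, I₁, 0, 0, γ * I₁ / μ)) := by
  obtain ⟨hS0, -, hC0, hM0, hR0, hN0⟩ := hΩ
  have hS := h.pos_S hα hS0
  have hI := h.pos_I hI0
  have hC := h.nonneg_C hC0
  have hM := h.nonneg_M hm hC hM0
  have hR := h.nonneg_R hq hγ (fun t ht ↦ (hI t ht).le) hM hR0
  have hN := h.total_le hμ hd hC hN0
  have hS0' : ∀ t ≥ 0, 0 ≤ S t := fun t ht ↦ ht.eq_or_lt.elim (· ▸ hS0) fun ht ↦ (hS t ht).le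
  have hbox : ∀ t ≥ 0, (S t, I t, C t) ∈ Icc 0 (α / μ) ×ˢ Icc 0 (α / μ) ×ˢ Icc 0 (α / μ) :=
    fun t ht ↦ by
      have := hS0' t ht; have := hI t ht; have := hC t ht; have := hM t ht; have := hR t ht
      have := hN t ht
      exact ⟨⟨by linarith, by linarith⟩, ⟨by linarith, by linarith⟩, ⟨by linarith, by linarith⟩⟩
  have hSlim := h.tendsto_S hc hμ hS₁ hI₁ hγS₁ hαE hk hS hI hbox
  have hIlim := h.tendsto_I hc hS₁ hαE hS hbox hSlim
  have hClim := h.tendsto_C hp hI₁ hγS₁ hI hbox hSlim hIlim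
  have hMlim := h.tendsto_M (by linarith) hClim
  exact hSlim.prodMk_nhds <| hIlim.prodMk_nhds <| hClim.prodMk_nhds <| hMlim.prodMk_nhds <|
    h.tendsto_R hμ hIlim hMlim

end IsSICMRSolution

lemma lt_mul_div_mul_sub_one_iff {c μ p R₀ K : ℝ} (hc : 0 < c) (hμ : 0 < μ) (hp : 0 < p) :
    K < p * (μ / c * (R₀ - 1)) ↔ 1 + c * K / (μ * p) < R₀ := by
  rw [← lt_sub_iff_add_lt', div_lt_iff₀ (by positivity), ← lt_div_iff₀' hc]
  ring_nf

/-- For the simplified SICMR system: if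
`1 < ℛ₀ ≤ 1 + c(m+d+μ)/(μp)`, the boundary equilibrium `E₁` is globally
asymptotically stable in `Ω` off the `S`-axis (every solution with initial
value in `Ω` and `I(0) > 0` converges to `E₁`); moreover, if
`ℛ₀ > 1 + c(m+d+μ)/(μp)`, then the Jacobian at `E₁` has the positive
eigenvalue `pI₁ − (m+d+μ)`, so `E₁` is linearly unstable. -/
theorem simplified_sicmr_boundary_stability
    (α c μ γ p m d q : ℝ)
    (hα : 0 < α) (hc : 0 < c) (hμ : 0 < μ) (hγ : 0 < γ) (hp : 0 < p)
    (hm : 0 < m) (hd : 0 < d) (hq : 0 < q)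
    (R₀ I₁ : ℝ)
    (hR₀ : R₀ = c * α / (μ * (μ + γ)))
    (hI₁ : I₁ = μ / c * (R₀ - 1)) :
    (1 < R₀ → R₀ ≤ 1 + c * (m + d + μ) / (μ * p) →
      ∀ S I C M R : ℝ → ℝ,
        (∀ t, 0 ≤ t → HasDerivAt S (α - c * S t * I t - μ * S t) t) →
        (∀ t, 0 ≤ t → HasDerivAt I
          (c * S t * I t - p * C t * I t - γ * I t - μ * I t) t) →
        (∀ t, 0 ≤ t → HasDerivAt C
          (p * C t * I t - m * C t - d * C t - μ * C t) t) →
        (∀ t, 0 ≤ t → HasDerivAt M (m * C t - q * M t - μ * M t) t) →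
        (∀ t, 0 ≤ t → HasDerivAt R (q * M t + γ * I t - μ * R t) t) →
        (0 ≤ S 0 ∧ 0 ≤ I 0 ∧ 0 ≤ C 0 ∧ 0 ≤ M 0 ∧ 0 ≤ R 0 ∧
          S 0 + I 0 + C 0 + M 0 + R 0 ≤ α / μ) →
        0 < I 0 →
        Tendsto (fun t => (S t, I t, C t, M t, R t)) atTop
          (nhds ((μ + γ) / c, μ / c * (R₀ - 1), (0 : ℝ), (0 : ℝ),
            γ / c * (R₀ - 1)))) ∧
    (R₀ > 1 + c * (m + d + μ) / (μ * p) →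
      0 < p * I₁ - (m + d + μ) ∧
      p * I₁ - (m + d + μ) ∈ spectrum ℝ
        (!![-(c * I₁) - μ, -(μ + γ), 0, 0, 0;
            c * I₁, 0, -(p * I₁), 0, 0;
            0, 0, p * I₁ - (m + d + μ), 0, 0;
            0, 0, m, -(q + μ), 0;
            0, γ, 0, q, -μ] : Matrix (Fin 5) (Fin 5) ℝ)) := by
  have hS₁ : 0 < (μ + γ) / c := by positivity
  have hγS₁ : c * ((μ + γ) / c) = μ + γ := by field_simp
  have hthreshold := lt_mul_div_mul_sub_one_iff (K := m + d + μ) (R₀ := R₀) hc hμ hp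
  rw [← hI₁] at hthreshold
  refine ⟨fun hR₀₁ hR₀₂ S I C M R hS hI hC hM hR hΩ hI0 ↦ ?_, fun hR₀₂ ↦ ?_⟩
  · have hI₁pos : 0 < I₁ := by rw [hI₁]; have := sub_pos.2 hR₀₁; positivity
    have hαE : c * ((μ + γ) / c) * I₁ + μ * ((μ + γ) / c) = α := by
      rw [hI₁, hR₀]; field_simp; ring
    rw [← hI₁, show γ / c * (R₀ - 1) = γ * I₁ / μ by rw [hI₁]; field_simp]
    exact IsSICMRSolution.tendsto_boundaryEquilibrium ⟨hS, hI, hC, hM, hR⟩ hα hc hμ hγ.le hp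
      hm.le hd.le hq.le hS₁ hI₁pos hγS₁ hαE (not_lt.1 (mt hthreshold.1 hR₀₂.not_gt)) hΩ hI0
  · refine ⟨sub_pos.2 (hthreshold.2 hR₀₂), mem_spectrum_of_row_eq_single 2 ?_⟩
    ext j
    fin_cases j <;> simp
end
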